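/- For every n ≥ 1, k ≥ 2 and every (k−1)-tuple π = (π_{12},…,π_{1k}) of permutations of {1,…,n}, the π-coordinatized lattice C(π) is a join-distributive lattice of length n whose join-width is at most k. -/
import Mathlib


/-- The initial segment `{σ(1), …, σ(j)}` of a permutation `σ` of `{1,…,n}`
(encoded on `Fin n`), as a finset; for `j = 0` this is `∅`. -/
def iniSeg {n : ℕ} (σ : Equiv.Perm (Fin n)) (j : ℕ) : Finset (Fin n) :=
  (Finset.univ.filter fun m : Fin n => (m : ℕ) < j).image σ

/-- The Edelman–Jamison lattice `E(σ)`: the join-subsemilattice of the powerset of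
`{1,…,n}` (ordered by inclusion, with join `∪`) generated by the initial segments
`{σ_i(1),…,σ_i(j)}`, `1 ≤ i ≤ k`, `0 ≤ j ≤ n`. -/
def EJ {n k : ℕ} (σ : Fin k → Equiv.Perm (Fin n)) : Set (Finset (Fin n)) :=
  supClosure {S | ∃ (i : Fin k) (j : ℕ), j ≤ n ∧ S = iniSeg (σ i) j}

/-- `π`-eligibility of a `k`-tuple `x ∈ {0,…,n}^k`: `π_{ij}(x_i + 1) ≥ x_j + 1` holds
whenever `x_i < n`, where `π_{ij} = π_{1j} ∘ π_{1i}⁻¹` (a value `v ∈ {1,…,n}` is encoded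
as the element `v - 1` of `Fin n`). -/
def Eligible {n k : ℕ} (π : Fin k → Equiv.Perm (Fin n)) (x : Fin k → ℕ) : Prop :=
  (∀ i, x i ≤ n) ∧
    ∀ (i j : Fin k) (h : x i < n), x j + 1 ≤ ((π j) ((π i)⁻¹ ⟨x i, h⟩) : ℕ) + 1

/-- Order-theoretic join-irreducibility: `a` is not minimal, and whenever `a` is the
least upper bound (join) of `b` and `c`, it equals `b` or `c`. -/
def SupIrredOrd {α : Type*} [PartialOrder α] (a : α) : Prop :=
  ¬IsMin a ∧ ∀ b c : α, IsLUB {b, c} a → a = b ∨ a = c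

/-- Order-theoretic join-distributivity: for every non-maximal `x`, writing `u` for the
join `x*` of the upper covers of `x`, the interval `[x, u]` is a distributive lattice;
joins and meets are expressed via `IsLUB`/`IsGLB`. -/
def JoinDistributiveOrd (α : Type*) [PartialOrder α] : Prop :=
  ∀ x u : α, ¬IsMax x → IsLUB {y | x ⋖ y} u →
    ∀ a ∈ Set.Icc x u, ∀ b ∈ Set.Icc x u, ∀ c ∈ Set.Icc x u,
      ∀ bc abc ab ac s : α,
        IsLUB {b, c} bc → IsGLB {a, bc} abc →
        IsGLB {a, b} ab → IsGLB {a, c} ac → IsLUB {ab, ac} s →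
        abc = s

namespace S6

open Finset

variable {n k : ℕ}

def seg (π : Fin k → Equiv.Perm (Fin n)) (i : Fin k) (j : ℕ) : Finset (Fin n) :=
  Finset.univ.filter fun v => (π i v : ℕ) < j

def Tset (π : Fin k → Equiv.Perm (Fin n)) (x : Fin k → ℕ) : Finset (Fin n) :=
  Finset.univ.filter fun v => ∃ i, (π i v : ℕ) < x i

variable {π : Fin k → Equiv.Perm (Fin n)}

lemma mem_seg {i : Fin k} {j : ℕ} {v : Fin n} : v ∈ seg π i j ↔ (π i v : ℕ) < j := by
  simp [seg]

lemma mem_Tset {x : Fin k → ℕ} {v : Fin n} : v ∈ Tset π x ↔ ∃ i, (π i v : ℕ) < x i := by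
  simp [Tset]

lemma seg_mono {i : Fin k} {j j' : ℕ} (h : j ≤ j') : seg π i j ⊆ seg π i j' :=
  fun v hv => mem_seg.2 (lt_of_lt_of_le (mem_seg.1 hv) h)

lemma seg_zero {i : Fin k} : seg π i 0 = ∅ := by
  ext v; simp [mem_seg]

lemma seg_subset_Tset {x : Fin k → ℕ} {i : Fin k} : seg π i (x i) ⊆ Tset π x :=
  fun v hv => mem_Tset.2 ⟨i, mem_seg.1 hv⟩

lemma Tset_mono {x y : Fin k → ℕ} (h : ∀ i, x i ≤ y i) : Tset π x ⊆ Tset π y := by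
  intro v hv
  obtain ⟨i, hi⟩ := mem_Tset.1 hv
  exact mem_Tset.2 ⟨i, lt_of_lt_of_le hi (h i)⟩

def mx (π : Fin k → Equiv.Perm (Fin n)) (S : Finset (Fin n)) (i : Fin k) : ℕ :=
  ((Finset.range (n+1)).filter fun j => seg π i j ⊆ S).max'
    ⟨0, by simp [Finset.mem_filter, seg_zero]⟩

lemma mx_mem {S : Finset (Fin n)} {i : Fin k} :
    mx π S i ∈ (Finset.range (n+1)).filter fun j => seg π i j ⊆ S :=
  Finset.max'_mem _ _

lemma mx_le {S : Finset (Fin n)} {i : Fin k} : mx π S i ≤ n := by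
  have := mx_mem (π := π) (S := S) (i := i)
  simp only [Finset.mem_filter, Finset.mem_range] at this
  omega

lemma seg_mx_subset {S : Finset (Fin n)} {i : Fin k} : seg π i (mx π S i) ⊆ S := by
  have := mx_mem (π := π) (S := S) (i := i)
  simp only [Finset.mem_filter] at this
  exact this.2

lemma le_mx {S : Finset (Fin n)} {i : Fin k} {j : ℕ} (hj : j ≤ n) (hs : seg π i j ⊆ S) :
    j ≤ mx π S i :=
  Finset.le_max' _ _ (by simp only [Finset.mem_filter, Finset.mem_range]; exact ⟨by omega, hs⟩)

lemma mx_mono {S S' : Finset (Fin n)} {i : Fin k} (h : S ⊆ S') : mx π S i ≤ mx π S' i :=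
  le_mx mx_le (seg_mx_subset.trans h)

def xS (π : Fin k → Equiv.Perm (Fin n)) (S : Finset (Fin n)) : Fin k → ℕ := fun i => mx π S i

lemma elig_iff {x : Fin k → ℕ} :
    Eligible π x ↔ (∀ i, x i ≤ n) ∧ ∀ i (h : x i < n), (π i)⁻¹ ⟨x i, h⟩ ∉ Tset π x := by
  unfold Eligible
  refine and_congr_right fun _ => ?_
  constructor
  · intro H i h hmem
    obtain ⟨j, hj⟩ := mem_Tset.1 hmem
    have := H i j h
    omega
  · intro H i j h
    have h2 := H i h
    rw [mem_Tset] at h2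
    push_neg at h2
    have := h2 j
    omega

lemma mem_seg_succ_iff {i : Fin k} {j : ℕ} {v : Fin n} (h : j < n) :
    v ∈ seg π i (j+1) ↔ v ∈ seg π i j ∨ v = (π i)⁻¹ ⟨j, h⟩ := by
  simp only [mem_seg]
  constructor
  · intro hv
    rcases Nat.lt_succ_iff_lt_or_eq.1 hv with h1 | h1
    · exact Or.inl h1
    · right
      have hve : π i v = ⟨j, h⟩ := Fin.ext h1
      rw [← hve]; simp
  · rintro (h1 | rfl)
    · omega
    · simp

lemma Tset_xS_subset (π : Fin k → Equiv.Perm (Fin n)) (S : Finset (Fin n)) :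
    Tset π (xS π S) ⊆ S := by
  intro v hv
  obtain ⟨j, hj⟩ := mem_Tset.1 hv
  exact seg_mx_subset (mem_seg.2 hj)

lemma elig_xS (π : Fin k → Equiv.Perm (Fin n)) (S : Finset (Fin n)) : Eligible π (xS π S) := by
  rw [elig_iff]
  refine ⟨fun i => mx_le, fun i h hmem => ?_⟩
  have hS : (π i)⁻¹ ⟨xS π S i, h⟩ ∈ S := Tset_xS_subset π S hmem
  have hsub : seg π i (xS π S i + 1) ⊆ S := by
    intro v hv
    rcases (mem_seg_succ_iff h).1 hv with h1 | rfl
    · exact seg_mx_subset h1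
    · exact hS
  have h2 := le_mx (by omega) hsub
  have h3 : xS π S i = mx π S i := rfl
  omega

lemma mx_Tset {x : Fin k → ℕ} (hx : Eligible π x) (i : Fin k) : mx π (Tset π x) i = x i := by
  rw [elig_iff] at hx
  refine le_antisymm ?_ (le_mx (hx.1 i) seg_subset_Tset)
  by_contra hlt
  push_neg at hlt
  have hxi : x i < n := lt_of_lt_of_le hlt mx_le
  have hm : (π i)⁻¹ ⟨x i, hxi⟩ ∈ seg π i (mx π (Tset π x) i) := by
    rw [mem_seg]; simp; omega
  exact hx.2 i hxi (seg_mx_subset hm)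
lemma le_of_Tset_subset {x y : Fin k → ℕ} (hx : Eligible π x) (hy : Eligible π y)
    (h : Tset π x ⊆ Tset π y) (i : Fin k) : x i ≤ y i := by
  rw [← mx_Tset hx i, ← mx_Tset hy i]; exact mx_mono h

lemma xS_le {S : Finset (Fin n)} {y : Fin k → ℕ} (hy : Eligible π y) (h : S ⊆ Tset π y)
    (i : Fin k) : xS π S i ≤ y i := by
  rw [← mx_Tset hy i]; exact mx_mono h

lemma le_xS {S : Finset (Fin n)} {x : Fin k → ℕ} (hx : Eligible π x) (h : Tset π x ⊆ S)
    (i : Fin k) : x i ≤ xS π S i := by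
  rw [← mx_Tset hx i]; exact mx_mono h

lemma eq_of_Tset_eq {x y : Fin k → ℕ} (hx : Eligible π x) (hy : Eligible π y)
    (h : Tset π x = Tset π y) : x = y :=
  funext fun i => by rw [← mx_Tset hx i, ← mx_Tset hy i, h]

lemma Tset_xS_of_unionSeg {S : Finset (Fin n)}
    (h : ∀ v ∈ S, ∃ i j, j ≤ n ∧ v ∈ seg π i j ∧ seg π i j ⊆ S) :
    Tset π (xS π S) = S := by
  refine subset_antisymm (Tset_xS_subset π S) fun v hv => ?_
  obtain ⟨i, j, hjn, hvj, hjS⟩ := h v hv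
  exact seg_subset_Tset (x := xS π S) (i := i) (seg_mono (le_mx hjn hjS) hvj)

/-- Candidate single-step extensions. -/
def nexts (π : Fin k → Equiv.Perm (Fin n)) (x : Fin k → ℕ) : Finset (Fin n) :=
  Finset.univ.filter fun e => ∃ i, (π i e : ℕ) = x i

lemma mem_nexts {x : Fin k → ℕ} {e : Fin n} : e ∈ nexts π x ↔ ∃ i, (π i e : ℕ) = x i := by
  simp [nexts]

lemma nexts_not_mem_Tset {x : Fin k → ℕ} (hx : Eligible π x) {e : Fin n}
    (he : e ∈ nexts π x) : e ∉ Tset π x := by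
  obtain ⟨i, hi⟩ := mem_nexts.1 he
  have hxi : x i < n := hi ▸ (π i e).isLt
  have he' : e = (π i)⁻¹ ⟨x i, hxi⟩ := by
    have h2 : π i e = ⟨x i, hxi⟩ := Fin.ext hi
    rw [← h2]; simp
  rw [he']
  exact (elig_iff.1 hx).2 i hxi

lemma Tset_xS_union {x : Fin k → ℕ} (hx : Eligible π x) {A : Finset (Fin n)}
    (hA : A ⊆ nexts π x) : Tset π (xS π (Tset π x ∪ A)) = Tset π x ∪ A := by
  apply Tset_xS_of_unionSeg
  intro v hv
  rcases Finset.mem_union.1 hv with hv | hv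
  · obtain ⟨i, hi⟩ := mem_Tset.1 hv
    exact ⟨i, x i, (elig_iff.1 hx).1 i, mem_seg.2 hi,
      seg_subset_Tset.trans Finset.subset_union_left⟩
  · obtain ⟨i, hi⟩ := mem_nexts.1 (hA hv)
    have hxi : x i < n := hi ▸ (π i v).isLt
    refine ⟨i, x i + 1, by omega, mem_seg.2 (by omega), fun w hw => ?_⟩
    rcases (mem_seg_succ_iff hxi).1 hw with h1 | rfl
    · exact Finset.subset_union_left (seg_subset_Tset (x := x) h1)
    · have : (π i)⁻¹ ⟨x i, hxi⟩ = v := by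
        have : π i v = ⟨x i, hxi⟩ := Fin.ext hi
        rw [← this]; simp
      rw [this]; exact Finset.subset_union_right hv

lemma Tset_xS_union2 {x y : Fin k → ℕ} (hx : Eligible π x) (hy : Eligible π y) :
    Tset π (xS π (Tset π x ∪ Tset π y)) = Tset π x ∪ Tset π y := by
  apply Tset_xS_of_unionSeg
  intro v hv
  rcases Finset.mem_union.1 hv with hv | hv
  · obtain ⟨i, hi⟩ := mem_Tset.1 hv
    exact ⟨i, x i, (elig_iff.1 hx).1 i, mem_seg.2 hi,
      seg_subset_Tset.trans Finset.subset_union_left⟩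
  · obtain ⟨i, hi⟩ := mem_Tset.1 hv
    exact ⟨i, y i, (elig_iff.1 hy).1 i, mem_seg.2 hi,
      seg_subset_Tset.trans Finset.subset_union_right⟩

lemma elig_min {x y : Fin k → ℕ} (hx : Eligible π x) (hy : Eligible π y) :
    Eligible π (fun i => min (x i) (y i)) := by
  refine ⟨fun i => le_trans (min_le_left _ _) (hx.1 i), fun i j h => ?_⟩
  simp only at h
  rcases le_total (x i) (y i) with hle | hle
  · have hxi : x i < n := by omega
    have hm : (⟨min (x i) (y i), h⟩ : Fin n) = ⟨x i, hxi⟩ := by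
      simp [Fin.mk.injEq]; omega
    rw [hm]
    exact le_trans (Nat.add_le_add_right (min_le_left (x j) (y j)) 1) (hx.2 i j hxi)
  · have hyi : y i < n := by omega
    have hm : (⟨min (x i) (y i), h⟩ : Fin n) = ⟨y i, hyi⟩ := by
      simp [Fin.mk.injEq]; omega
    rw [hm]
    exact le_trans (Nat.add_le_add_right (min_le_right (x j) (y j)) 1) (hy.2 i j hyi)
variable (π) in
abbrev EL := {x : Fin k → ℕ // Eligible π x}

def toL (π : Fin k → Equiv.Perm (Fin n)) (S : Finset (Fin n)) : EL π :=
  ⟨xS π S, elig_xS π S⟩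

lemma le_def {a b : EL π} : a ≤ b ↔ ∀ i, a.1 i ≤ b.1 i := Iff.rfl

lemma le_iff_Tsub {a b : EL π} : a ≤ b ↔ Tset π a.1 ⊆ Tset π b.1 :=
  ⟨fun h => Tset_mono (le_def.1 h), fun h => le_def.2 fun i => le_of_Tset_subset a.2 b.2 h i⟩

lemma eq_iff_Teq {a b : EL π} : a = b ↔ Tset π a.1 = Tset π b.1 :=
  ⟨fun h => by rw [h], fun h => Subtype.ext (eq_of_Tset_eq a.2 b.2 h)⟩

lemma toL_le {S : Finset (Fin n)} {b : EL π} (h : S ⊆ Tset π b.1) : toL π S ≤ b :=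
  le_def.2 (xS_le b.2 h)

lemma le_toL {S : Finset (Fin n)} {a : EL π} (h : Tset π a.1 ⊆ S) : a ≤ toL π S :=
  le_def.2 (le_xS a.2 h)

lemma toL_mono {S S' : Finset (Fin n)} (h : S ⊆ S') : toL π S ≤ toL π S' :=
  le_def.2 fun i => mx_mono h

def supL (a b : EL π) : EL π := toL π (Tset π a.1 ∪ Tset π b.1)

def infL (a b : EL π) : EL π := ⟨fun i => min (a.1 i) (b.1 i), elig_min a.2 b.2⟩

lemma Tset_supL (a b : EL π) : Tset π (supL a b).1 = Tset π a.1 ∪ Tset π b.1 :=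
  Tset_xS_union2 a.2 b.2

instance : Lattice (EL π) :=
  { (inferInstance : PartialOrder (EL π)) with
    sup := supL
    le_sup_left := fun _ _ => le_toL Finset.subset_union_left
    le_sup_right := fun _ _ => le_toL Finset.subset_union_right
    sup_le := fun _ _ _ hac hbc =>
      toL_le (Finset.union_subset (le_iff_Tsub.1 hac) (le_iff_Tsub.1 hbc))
    inf := infL
    inf_le_left := fun a b => le_def.2 fun i => min_le_left _ _
    inf_le_right := fun a b => le_def.2 fun i => min_le_right _ _
    le_inf := fun _ _ _ h1 h2 => le_def.2 fun i => le_min (le_def.1 h1 i) (le_def.1 h2 i) }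

lemma elig_zero : Eligible π (fun _ => 0) :=
  ⟨fun _ => Nat.zero_le n, fun _ _ _ => Nat.succ_le_succ (Nat.zero_le _)⟩

instance : OrderBot (EL π) where
  bot := ⟨fun _ => 0, elig_zero⟩
  bot_le := fun _ => le_def.2 fun _ => Nat.zero_le _

lemma Tset_sup (a b : EL π) : Tset π (a ⊔ b).1 = Tset π a.1 ∪ Tset π b.1 := Tset_supL a b

lemma inf_val (a b : EL π) : (a ⊓ b).1 = fun i => min (a.1 i) (b.1 i) := rfl
lemma exists_next {a b : EL π} (h : a < b) : ∃ e ∈ nexts π a.1, e ∈ Tset π b.1 := by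
  obtain ⟨hle, hne⟩ := lt_iff_le_and_ne.1 h
  have hex : ∃ i, a.1 i < b.1 i := by
    by_contra hc; push_neg at hc
    exact hne (Subtype.ext (funext fun i => le_antisymm (le_def.1 hle i) (hc i)))
  obtain ⟨i, hi⟩ := hex
  have hai : a.1 i < n := lt_of_lt_of_le hi (b.2.1 i)
  exact ⟨(π i)⁻¹ ⟨a.1 i, hai⟩, mem_nexts.2 ⟨i, by simp⟩, mem_Tset.2 ⟨i, by simpa using hi⟩⟩

lemma covBy_of_next {a : EL π} {e : Fin n} (he : e ∈ nexts π a.1) :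
    a ⋖ toL π (Tset π a.1 ∪ {e}) := by
  have hT : Tset π (toL π (Tset π a.1 ∪ {e})).1 = Tset π a.1 ∪ {e} :=
    Tset_xS_union a.2 (Finset.singleton_subset_iff.2 he)
  have hen : e ∉ Tset π a.1 := nexts_not_mem_Tset a.2 he
  constructor
  · rw [lt_iff_le_and_ne]
    refine ⟨le_toL Finset.subset_union_left, fun hEq => ?_⟩
    have := eq_iff_Teq.1 hEq
    rw [hT] at this
    exact hen (this ▸ Finset.mem_union_right _ (Finset.mem_singleton_self e))
  · intro z haz hz
    have h1 : Tset π a.1 ⊆ Tset π z.1 := le_iff_Tsub.1 haz.le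
    have h2 : Tset π z.1 ⊆ Tset π a.1 ∪ {e} := hT ▸ le_iff_Tsub.1 hz.le
    have hza : Tset π z.1 ≠ Tset π a.1 := fun hEq => haz.ne (eq_iff_Teq.2 hEq.symm)
    have hez : e ∈ Tset π z.1 := by
      by_contra hc
      refine hza (subset_antisymm (fun v hv => ?_) h1)
      rcases Finset.mem_union.1 (h2 hv) with h | h
      · exact h
      · exact absurd (Finset.mem_singleton.1 h ▸ hv) hc
    have : Tset π z.1 = Tset π a.1 ∪ {e} := by
      refine subset_antisymm h2 (Finset.union_subset h1 ?_)
      simpa using hez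
    exact hz.ne (eq_iff_Teq.2 (this.trans hT.symm))

lemma covBy_eq {a b : EL π} (h : a ⋖ b) :
    ∃ e ∈ nexts π a.1, b = toL π (Tset π a.1 ∪ {e}) := by
  obtain ⟨e, he, heb⟩ := exists_next h.1
  refine ⟨e, he, ?_⟩
  have hle : toL π (Tset π a.1 ∪ {e}) ≤ b :=
    toL_le (Finset.union_subset (le_iff_Tsub.1 h.1.le) (Finset.singleton_subset_iff.2 heb))
  rcases hle.lt_or_eq with hlt | hEq
  · exact absurd hlt (h.2 (covBy_of_next he).1)
  · exact hEq.symm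

lemma nexts_nonempty {a : EL π} (h : ¬IsMax a) : (nexts π a.1).Nonempty := by
  obtain ⟨b, hb⟩ := not_isMax_iff.1 h
  obtain ⟨e, he, _⟩ := exists_next hb
  exact ⟨e, he⟩

lemma isLUB_covers {a : EL π} (hne : (nexts π a.1).Nonempty) :
    IsLUB {y | a ⋖ y} (toL π (Tset π a.1 ∪ nexts π a.1)) := by
  constructor
  · rintro y hy
    obtain ⟨e, he, rfl⟩ := covBy_eq hy
    exact toL_mono (Finset.union_subset_union_right (Finset.singleton_subset_iff.2 he))
  · rintro c hc
    have key : ∀ e ∈ nexts π a.1, Tset π a.1 ∪ {e} ⊆ Tset π c.1 := by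
      intro e he
      have h1 : toL π (Tset π a.1 ∪ {e}) ≤ c := hc (covBy_of_next he)
      have h2 := le_iff_Tsub.1 h1
      have h3 : Tset π (toL π (Tset π a.1 ∪ {e})).1 = Tset π a.1 ∪ {e} :=
        Tset_xS_union a.2 (Finset.singleton_subset_iff.2 he)
      rwa [h3] at h2
    apply toL_le
    apply Finset.union_subset
    · obtain ⟨e, he⟩ := hne
      exact Finset.subset_union_left.trans (key e he)
    · intro e he
      exact key e he (Finset.mem_union_right _ (Finset.mem_singleton_self e))

lemma Tset_u (a : EL π) : Tset π (toL π (Tset π a.1 ∪ nexts π a.1)).1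
    = Tset π a.1 ∪ nexts π a.1 :=
  Tset_xS_union a.2 (subset_refl _)

lemma Tset_inf_of_interval {x a w : EL π} (hxa : x ≤ a) (hxw : x ≤ w)
    (ha : Tset π a.1 ⊆ Tset π x.1 ∪ nexts π x.1) :
    Tset π (a ⊓ w).1 = Tset π a.1 ∩ Tset π w.1 := by
  set S := Tset π a.1 ∩ Tset π w.1 with hSdef
  have hxS : Tset π x.1 ⊆ S :=
    Finset.subset_inter (le_iff_Tsub.1 hxa) (le_iff_Tsub.1 hxw)
  have hSu : S = Tset π x.1 ∪ (S \ Tset π x.1) := (Finset.union_sdiff_of_subset hxS).symm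
  have hAn : S \ Tset π x.1 ⊆ nexts π x.1 := by
    intro v hv
    rcases Finset.mem_sdiff.1 hv with ⟨hv1, hv2⟩
    rcases Finset.mem_union.1 (ha (Finset.mem_inter.1 hv1).1) with h | h
    · exact absurd h hv2
    · exact h
  have hTS : Tset π (toL π S).1 = S := by
    have h0 := Tset_xS_union x.2 hAn
    rw [← hSu] at h0
    exact h0
  have hc : toL π S = a ⊓ w := by
    apply le_antisymm
    · exact le_inf (toL_le Finset.inter_subset_left) (toL_le Finset.inter_subset_right)
    · refine le_def.2 fun i => ?_
      refine le_mx (le_trans (min_le_left _ _) (a.2.1 i)) ?_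
      intro v hv
      rw [mem_seg] at hv
      exact Finset.mem_inter.2
        ⟨mem_Tset.2 ⟨i, lt_of_lt_of_le hv (min_le_left _ _)⟩,
         mem_Tset.2 ⟨i, lt_of_lt_of_le hv (min_le_right _ _)⟩⟩
  rw [← hc, hTS]
lemma joinDist : JoinDistributiveOrd (EL π) := by
  intro x u hmax hlub a ha b hb c hc bc abc ab ac s h1 h2 h3 h4 h5
  have hne := nexts_nonempty hmax
  have hu : u = toL π (Tset π x.1 ∪ nexts π x.1) := hlub.unique (isLUB_covers hne)
  have hTu : Tset π u.1 = Tset π x.1 ∪ nexts π x.1 := by rw [hu]; exact Tset_u x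
  have hIa : Tset π a.1 ⊆ Tset π x.1 ∪ nexts π x.1 := hTu ▸ le_iff_Tsub.1 ha.2
  have hbc : bc = b ⊔ c := h1.unique isLUB_pair
  have habc : abc = a ⊓ bc := h2.unique isGLB_pair
  have hab : ab = a ⊓ b := h3.unique isGLB_pair
  have hac : ac = a ⊓ c := h4.unique isGLB_pair
  have hs : s = ab ⊔ ac := h5.unique isLUB_pair
  have hTbc : Tset π bc.1 = Tset π b.1 ∪ Tset π c.1 := by rw [hbc]; exact Tset_sup b c
  have hxbc : x ≤ bc := hbc ▸ le_trans hb.1 le_sup_left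
  have hTabc : Tset π abc.1 = Tset π a.1 ∩ Tset π bc.1 := by
    rw [habc]; exact Tset_inf_of_interval ha.1 hxbc hIa
  have hTab : Tset π ab.1 = Tset π a.1 ∩ Tset π b.1 := by
    rw [hab]; exact Tset_inf_of_interval ha.1 hb.1 hIa
  have hTac : Tset π ac.1 = Tset π a.1 ∩ Tset π c.1 := by
    rw [hac]; exact Tset_inf_of_interval ha.1 hc.1 hIa
  apply eq_iff_Teq.2
  rw [hTabc, hTbc, hs, Tset_sup, hTab, hTac, Finset.inter_union_distrib_left]

lemma length_le (p : LTSeries (EL π)) : p.length ≤ n := by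
  have key : ∀ m : ℕ, ∀ hm : m ≤ p.length, m ≤ (Tset π (p ⟨m, by omega⟩).1).card := by
    intro m
    induction m with
    | zero => intro _; exact Nat.zero_le _
    | succ m ih =>
      intro hm
      have h1 := ih (by omega)
      have hlt : p ⟨m, by omega⟩ < p ⟨m+1, by omega⟩ := p.step ⟨m, by omega⟩
      have hss : Tset π (p ⟨m, by omega⟩).1 ⊂ Tset π (p ⟨m+1, by omega⟩).1 :=
        ssubset_of_subset_of_ne (le_iff_Tsub.1 hlt.le) (fun h => hlt.ne (eq_iff_Teq.2 h))
      have h2 := Finset.card_lt_card hss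
      omega
  have h2 := key p.length le_rfl
  have h3 : (Tset π (p ⟨p.length, by omega⟩).1).card ≤ n := by
    calc _ ≤ Fintype.card (Fin n) := Finset.card_le_univ _
    _ = n := Fintype.card_fin n
  omega

lemma chainEl_coord {i0 : Fin k} {t : ℕ} (ht : t ≤ n) : (toL π (seg π i0 t)).1 i0 = t := by
  show mx π (seg π i0 t) i0 = t
  refine le_antisymm ?_ (le_mx ht (subset_refl _))
  by_contra hlt
  push_neg at hlt
  have htn : t < n := lt_of_lt_of_le hlt mx_le
  have hm : (π i0)⁻¹ ⟨t, htn⟩ ∈ seg π i0 (mx π (seg π i0 t) i0) := by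
    rw [mem_seg]; simp; omega
  have h2 := seg_mx_subset hm
  rw [mem_seg] at h2
  simp at h2

lemma chain_lt {i0 : Fin k} {t : ℕ} (ht : t < n) :
    toL π (seg π i0 t) < toL π (seg π i0 (t+1)) := by
  refine lt_of_le_of_ne (toL_mono (seg_mono (by omega))) fun hEq => ?_
  have h1 : (toL π (seg π i0 t)).1 i0 = t := chainEl_coord (by omega)
  have h2 : (toL π (seg π i0 (t+1))).1 i0 = t+1 := chainEl_coord (by omega)
  rw [hEq, h2] at h1
  omega

lemma krull (i0 : Fin k) : Order.krullDim (EL π) = n := by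
  have hnE : Nonempty (EL π) := ⟨⊥⟩
  apply le_antisymm
  · rw [Order.krullDim_eq_iSup_length]
    have hb : (⨆ p : LTSeries (EL π), (p.length : ℕ∞)) ≤ (n : ℕ∞) :=
      iSup_le fun p => by exact_mod_cast length_le p
    exact_mod_cast hb
  · let p : LTSeries (EL π) :=
      ⟨n, fun m => toL π (seg π i0 (m : ℕ)), fun i => by
        have := chain_lt (π := π) (i0 := i0) (t := (i : ℕ)) i.isLt
        simpa using this⟩
    have h0 := Order.LTSeries.length_le_krullDim p
    exact h0

lemma supIrred_of {a : EL π} (ha : SupIrredOrd a) : SupIrred a :=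
  ⟨ha.1, fun b c hbc => by
    rcases ha.2 b c (hbc ▸ isLUB_pair) with h | h
    · exact Or.inl h.symm
    · exact Or.inr h.symm⟩

lemma eq_sup_irr [Nonempty (Fin k)] (a : EL π) (ha : SupIrredOrd a) :
    ∃ i : Fin k, a = toL π (seg π i (a.1 i)) := by
  have hsup : Finset.univ.sup (fun i => toL π (seg π i (a.1 i))) = a := by
    apply le_antisymm
    · exact Finset.sup_le fun i _ => toL_le seg_subset_Tset
    · rw [le_iff_Tsub]
      intro v hv
      obtain ⟨i, hi⟩ := mem_Tset.1 hv
      have h1 : a.1 i ≤ (toL π (seg π i (a.1 i))).1 i := le_mx (a.2.1 i) (subset_refl _)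
      have h2 : v ∈ Tset π (toL π (seg π i (a.1 i))).1 :=
        seg_subset_Tset (x := (toL π (seg π i (a.1 i))).1) (i := i)
          (mem_seg.2 (lt_of_lt_of_le hi h1))
      exact le_iff_Tsub.1 (Finset.le_sup (Finset.mem_univ i)) h2
  obtain ⟨i, _, hieq⟩ := (supIrred_of ha).finset_sup_eq hsup
  exact ⟨i, hieq.symm⟩

end S6

/-- For every `n ≥ 1`, `k ≥ 2` and every `(k-1)`-tuple
`π = (π_{12},…,π_{1k})` of permutations of `{1,…,n}` (encoded as
`π : Fin k → Equiv.Perm (Fin n)` with `π 0 = id` playing the role of `π_{11}`), the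
`π`-coordinatized poset `C(π)` of eligible tuples (ordered componentwise) is a lattice,
it is join-distributive, its length is `n`, and its join-width is at most `k`. -/
theorem statement6 (n k : ℕ) (hn : 1 ≤ n) (hk : 2 ≤ k)
    (π : Fin k → Equiv.Perm (Fin n)) (hπ : π ⟨0, by omega⟩ = 1) :
    (∀ a b : {x : Fin k → ℕ // Eligible π x},
      (∃ s, IsLUB {a, b} s) ∧ (∃ t, IsGLB {a, b} t)) ∧
    JoinDistributiveOrd {x : Fin k → ℕ // Eligible π x} ∧
    Order.krullDim {x : Fin k → ℕ // Eligible π x} = n ∧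
    ∀ A : Finset {x : Fin k → ℕ // Eligible π x},
      IsAntichain (· ≤ ·) (A : Set {x : Fin k → ℕ // Eligible π x}) →
      (∀ a ∈ A, SupIrredOrd a) → A.card ≤ k := by
  have i0 : Fin k := ⟨0, by omega⟩
  have hkne : Nonempty (Fin k) := ⟨i0⟩
  refine ⟨fun a b => ⟨⟨a ⊔ b, isLUB_pair⟩, ⟨a ⊓ b, isGLB_pair⟩⟩,
    S6.joinDist, S6.krull i0, ?_⟩
  intro A hA hirr
  have hspec : ∀ a ∈ A, ∃ i : Fin k, a = S6.toL π (S6.seg π i (a.1 i)) :=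
    fun a haA => S6.eq_sup_irr a (hirr a haA)
  choose g hg using hspec
  have hcard : A.card ≤ (Finset.univ : Finset (Fin k)).card := by
    apply Finset.card_le_card_of_injOn
      (fun a => if h : a ∈ A then g a h else i0) (fun _ _ => Finset.mem_univ _)
    intro a haA b hbA hEq
    have haA' : a ∈ A := haA
    have hbA' : b ∈ A := hbA
    simp only [dif_pos haA', dif_pos hbA'] at hEq
    by_contra hne
    have hcmp : a ≤ b ∨ b ≤ a := by
      rcases le_total (a.1 (g a haA')) (b.1 (g a haA')) with h | h
      · left
        rw [hg a haA', hg b hbA', ← hEq]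
        exact S6.toL_mono (S6.seg_mono h)
      · right
        rw [hg a haA', hg b hbA', ← hEq]
        exact S6.toL_mono (S6.seg_mono h)
    rcases hcmp with h | h
    · exact hA haA' hbA' hne h
    · exact hA hbA' haA' (Ne.symm hne) h
  simpa using hcard
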